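/- Let u, v, ξ ∈ ℂⁿ (n ≥ 2), α ≥ 0, and 1 ≤ p ≤ ∞ with conjugate exponent q. If v has pairwise distinct coordinates and |uᵢ - ξᵢ| ≤ α |vᵢ - ξᵢ| for all i, then for all i ≠ j, |uᵢ - uⱼ| ≥ (1 - 2^{1/q}(1 + α) ‖(v - ξ)/d(v)‖_p) |vᵢ - vⱼ|. -/

import Mathlib

open scoped ENNReal

noncomputable def pnorm (p : ℝ≥0∞) {n : ℕ} (w : Fin n → ℝ) : ℝ :=
  ‖(WithLp.equiv p (Fin n → ℝ)).symm w‖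

noncomputable def dmin {n : ℕ} (v : Fin n → ℂ) (i : Fin n) : ℝ :=
  ⨅ j : {j : Fin n // j ≠ i}, ‖v i - v j.1‖

/-! With `wₖ = |vₖ - ξₖ| / dₖ(v)` we have `|vᵢ - ξᵢ| ≤ wᵢ |vᵢ - vⱼ|`, since `dᵢ(v) ≤ |vᵢ - vⱼ|`,
and `|vᵢ - uᵢ| ≤ (1 + α) |vᵢ - ξᵢ|`. The triangle inequality through `uᵢ, uⱼ` then gives
`|vᵢ - vⱼ| ≤ |uᵢ - uⱼ| + (1 + α) (wᵢ + wⱼ) |vᵢ - vⱼ|`, and `wᵢ + wⱼ ≤ 2^{1/q} ‖w‖_p` is the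
power mean (Hölder) inequality on the two coordinates `i, j`. -/

open Finset in
theorem PiLp.sum_norm_le_card_rpow_mul_norm {ι : Type*} [Fintype ι] {β : ι → Type*}
    [∀ i, SeminormedAddCommGroup (β i)] {p q : ℝ≥0∞} [p.HolderConjugate q]
    (x : PiLp p β) (s : Finset ι) :
    ∑ i ∈ s, ‖x i‖ ≤ (#s : ℝ) ^ q⁻¹.toReal * ‖x‖ := by
  have : Fact (1 ≤ p) := ⟨ENNReal.HolderConjugate.one_le p q⟩
  rcases eq_or_ne p ∞ with rfl | hp
  · obtain rfl : q = 1 := (ENNReal.HolderConjugate.eq_top_iff_eq_one ∞ q).mp rfl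
    simpa using sum_le_card_nsmul s _ _ fun i _ => PiLp.norm_apply_le x i
  have hp₁ : 1 ≤ p.toReal := by
    simpa using ENNReal.toReal_mono hp (ENNReal.HolderConjugate.one_le p q)
  have hp₀ : 0 < p.toReal := one_pos.trans_le hp₁
  have hq : q⁻¹.toReal = 1 - p.toReal⁻¹ := by
    rw [← ENNReal.HolderConjugate.one_sub_inv p q,
      ENNReal.toReal_sub_of_le (ENNReal.inv_le_one.mpr (ENNReal.HolderConjugate.one_le p q))
        ENNReal.one_ne_top, ENNReal.toReal_one, ENNReal.toReal_inv]
  have hsum : ∑ i ∈ s, ‖x i‖ ^ p.toReal ≤ ‖x‖ ^ p.toReal := by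
    rw [PiLp.norm_eq_sum hp₀, ← Real.rpow_mul (by positivity), one_div,
      inv_mul_cancel₀ hp₀.ne', Real.rpow_one]
    exact sum_le_sum_of_subset_of_nonneg (subset_univ s) fun i _ _ => by positivity
  have hpow : (∑ i ∈ s, ‖x i‖) ^ p.toReal ≤ ((#s : ℝ) ^ q⁻¹.toReal * ‖x‖) ^ p.toReal := by
    rw [Real.mul_rpow (by positivity) (norm_nonneg x), ← Real.rpow_mul (by positivity), hq,
      sub_mul, inv_mul_cancel₀ hp₀.ne', one_mul]
    calc (∑ i ∈ s, ‖x i‖) ^ p.toReal ≤ (#s : ℝ) ^ (p.toReal - 1) * ∑ i ∈ s, ‖x i‖ ^ p.toReal :=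
          Real.rpow_sum_le_const_mul_sum_rpow_of_nonneg s hp₁ fun i _ => norm_nonneg _
      _ ≤ (#s : ℝ) ^ (p.toReal - 1) * ‖x‖ ^ p.toReal := by gcongr
  exact (Real.rpow_le_rpow_iff (by positivity) (by positivity) hp₀).mp hpow

theorem norm_sub_le_one_add_mul {E : Type*} [SeminormedAddCommGroup E] {a b c : E} {α : ℝ}
    (h : ‖a - c‖ ≤ α * ‖b - c‖) : ‖b - a‖ ≤ (1 + α) * ‖b - c‖ := by
  have := norm_sub_le_norm_sub_add_norm_sub b c a
  rw [norm_sub_rev c a] at this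
  linarith

section dmin

variable {n : ℕ} {v : Fin n → ℂ} {i j : Fin n}

theorem dmin_nonneg (v : Fin n → ℂ) (i : Fin n) : 0 ≤ dmin v i :=
  Real.iInf_nonneg fun _ ↦ norm_nonneg _

theorem dmin_le (v : Fin n → ℂ) (hj : j ≠ i) : dmin v i ≤ ‖v i - v j‖ :=
  ciInf_le (Set.finite_range _).bddBelow (⟨j, hj⟩ : {k : Fin n // k ≠ i})

theorem dmin_pos (hv : Function.Injective v) (hj : j ≠ i) : 0 < dmin v i := by
  have : Nonempty {k : Fin n // k ≠ i} := ⟨⟨j, hj⟩⟩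
  obtain ⟨k, hk⟩ := exists_eq_ciInf_of_finite (f := fun k : {k : Fin n // k ≠ i} ↦ ‖v i - v k‖)
  rw [dmin, ← hk, norm_pos_iff, sub_ne_zero]
  exact fun h ↦ k.2 (hv h).symm

theorem le_div_dmin_mul_norm_sub (hv : Function.Injective v) (hj : j ≠ i) {a : ℝ}
    (ha : 0 ≤ a) : a ≤ a / dmin v i * ‖v i - v j‖ := by
  have hd := dmin_pos hv hj
  calc a = a / dmin v i * dmin v i := (div_mul_cancel₀ a hd.ne').symm
    _ ≤ a / dmin v i * ‖v i - v j‖ := by gcongr; exact dmin_le v hj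

end dmin

theorem u_u_xi_alpha_inequality_general (n : ℕ) (u v ξ : Fin n → ℂ)
    (α : ℝ) (hα : 0 ≤ α) (hv : Function.Injective v)
    (p q : ℝ≥0∞) (hpq : 1/p + 1/q = 1)
    (hu : ∀ i, ‖u i - ξ i‖ ≤ α * ‖v i - ξ i‖) :
    ∀ i j : Fin n, i ≠ j →
      (1 - (2:ℝ) ^ (1/q).toReal * (1 + α) *
            pnorm p (fun k => ‖v k - ξ k‖ / dmin v k))
          * ‖v i - v j‖
        ≤ ‖u i - u j‖ := by
  intro i j hij
  have : p.HolderConjugate q := ENNReal.holderConjugate_iff.mpr (by simpa only [one_div] using hpq)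
  set w : Fin n → ℝ := fun k => ‖v k - ξ k‖ / dmin v k
  set A := ‖v i - v j‖
  have hw : ∀ k, 0 ≤ w k := fun k ↦ div_nonneg (norm_nonneg _) (dmin_nonneg v k)
  have hpair : w i + w j ≤ (2:ℝ) ^ (1/q).toReal * pnorm p w := by
    simpa [pnorm, Finset.sum_pair hij, Finset.card_pair hij, abs_of_nonneg (hw i),
      abs_of_nonneg (hw j)] using
      PiLp.sum_norm_le_card_rpow_mul_norm (q := q) ((WithLp.equiv p (Fin n → ℝ)).symm w) {i, j}
  have hi : ‖v i - u i‖ ≤ (1 + α) * (w i * A) :=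
    (norm_sub_le_one_add_mul (hu i)).trans <| by
      gcongr; exact le_div_dmin_mul_norm_sub hv hij.symm (norm_nonneg _)
  have hj : ‖u j - v j‖ ≤ (1 + α) * (w j * A) := by
    rw [norm_sub_rev, show A = ‖v j - v i‖ from norm_sub_rev _ _]
    exact (norm_sub_le_one_add_mul (hu j)).trans <| by
      gcongr; exact le_div_dmin_mul_norm_sub hv hij (norm_nonneg _)
  have htri : A ≤ ‖v i - u i‖ + ‖u i - u j‖ + ‖u j - v j‖ := by
    simpa only [dist_eq_norm] using dist_triangle4 (v i) (u i) (u j) (v j)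
  calc (1 - 2 ^ (1/q).toReal * (1 + α) * pnorm p w) * A
      = A - (1 + α) * A * (2 ^ (1/q).toReal * pnorm p w) := by ring
    _ ≤ A - (1 + α) * A * (w i + w j) := by gcongr
    _ ≤ ‖u i - u j‖ := by linarith

theorem u_u_xi_alpha_inequality (n : ℕ) (hn : 2 ≤ n) (u v ξ : Fin n → ℂ)
    (α : ℝ) (hα : 0 ≤ α) (hv : Function.Injective v)
    (p q : ℝ≥0∞) (hp : 1 ≤ p) (hpq : 1/p + 1/q = 1)
    (hu : ∀ i, ‖u i - ξ i‖ ≤ α * ‖v i - ξ i‖) :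
    ∀ i j : Fin n, i ≠ j →
      (1 - (2:ℝ) ^ (1/q).toReal * (1 + α) *
            pnorm p (fun k => ‖v k - ξ k‖ / dmin v k))
          * ‖v i - v j‖
        ≤ ‖u i - u j‖ :=
  u_u_xi_alpha_inequality_general n u v ξ α hα hv p q hpq hu
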